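/- Let m ≥ 4 be even and let β = δ + δ^{(m/2 − 1)e_1}. Then p^m(β) > 0 and p^k(β) = 0 for every k < m, where p^k(β) counts balanced strings s of length k with φ(s)^i = β for some i. -/

import Mathlib

/-- The alphabet `S = {V, U_1, ..., U_d, D_1, ..., D_d}`: `none` is `V`,
`some (v, true)` is `U_v`, `some (v, false)` is `D_v`. -/
abbrev ASym (d : ℕ) := Option (Fin d × Bool)

/-- The step in `ℤ^d` associated to a symbol. -/
def step {d : ℕ} : ASym d → (Fin d → ℤ)
  | none => 0
  | some (v, true) => Pi.single v 1
  | some (v, false) => -(Pi.single v 1)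

/-- The walk `y_j(s)` associated to a string `s ∈ S^k`, starting at `0`. -/
def walk {d k : ℕ} (s : Fin k → ASym d) (j : ℕ) : Fin d → ℤ :=
  ∑ i ∈ Finset.range j, if h : i < k then step (s ⟨i, h⟩) else 0
/-- The multi-index `φ(s)`: `φ(s)_n = #{1 ≤ j ≤ k : y_j(s) = y_{j-1}(s) = n}`. -/
def phi {d k : ℕ} (s : Fin k → ASym d) (n : Fin d → ℤ) : ℕ :=
  (Finset.univ.filter fun j : Fin k =>
    walk s ((j : ℕ) + 1) = n ∧ walk s (j : ℕ) = n).card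

/-- The indicator multi-index `δ^i` of the point `i ∈ ℤ^d`. -/
def deltaIdx {d : ℕ} (i : Fin d → ℤ) (n : Fin d → ℤ) : ℕ :=
  if n = i then 1 else 0
open Classical in
/-- `p^k(β)`: the number of balanced strings `s ∈ S^k` with `φ(s)^i = β` for some `i ∈ ℤ^d`,
i.e. `β_n = φ(s)_{n-i}` for all `n`. -/
noncomputable def pathCount (d k : ℕ) (β : (Fin d → ℤ) → ℕ) : ℕ :=
  (Finset.univ.filter fun s : Fin k → ASym d =>
    walk s k = 0 ∧ ∃ i : Fin d → ℤ, ∀ n, β n = phi s (n - i)).card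

/- ### Auxiliary material -/

/-- The `ℓ¹`-norm on `ℤ^d`. -/
def l1 {d : ℕ} (x : Fin d → ℤ) : ℤ := ∑ v, |x v|

lemma l1_nonneg {d : ℕ} (x : Fin d → ℤ) : 0 ≤ l1 x :=
  Finset.sum_nonneg fun _ _ => abs_nonneg _

lemma l1_zero {d : ℕ} : l1 (0 : Fin d → ℤ) = 0 := by simp [l1]

lemma l1_neg {d : ℕ} (x : Fin d → ℤ) : l1 (-x) = l1 x := by
  simp [l1]

lemma l1_add {d : ℕ} (x y : Fin d → ℤ) : l1 (x + y) ≤ l1 x + l1 y := by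
  simp only [l1, Pi.add_apply, ← Finset.sum_add_distrib]
  exact Finset.sum_le_sum fun v _ => abs_add_le _ _

lemma l1_single {d : ℕ} (v : Fin d) (c : ℤ) : l1 (Pi.single v c) = |c| := by
  unfold l1
  rw [Finset.sum_eq_single v]
  · simp
  · intro u _ hu; simp [Pi.single_eq_of_ne hu]
  · simp

lemma l1_step_le {d : ℕ} (a : ASym d) : l1 (step a) ≤ 1 := by
  rcases a with _ | ⟨v, b⟩
  · simp [step, l1]
  · cases b <;> simp [step, l1_neg, l1_single]

lemma step_eq_zero_iff {d : ℕ} (a : ASym d) : step a = 0 ↔ a = none := by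
  rcases a with _ | ⟨v, b⟩
  · simp [step]
  · cases b <;>
    · simp only [step]
      constructor
      · intro h
        have := congrFun h v
        simp [Pi.single_eq_same] at this
      · intro h; simp at h

lemma l1_sum_le {d : ℕ} {ι : Type*} (T : Finset ι) (f : ι → Fin d → ℤ) :
    l1 (∑ j ∈ T, f j) ≤ ∑ j ∈ T, l1 (f j) := by
  unfold l1
  calc ∑ v, |(∑ j ∈ T, f j) v| = ∑ v, |∑ j ∈ T, f j v| := by simp
    _ ≤ ∑ v, ∑ j ∈ T, |f j v| :=
        Finset.sum_le_sum fun v _ => Finset.abs_sum_le_sum_abs _ _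
    _ = ∑ j ∈ T, ∑ v, |f j v| := Finset.sum_comm

lemma walk_zero {d k : ℕ} (s : Fin k → ASym d) : walk s 0 = 0 := by simp [walk]

lemma walk_succ {d k : ℕ} (s : Fin k → ASym d) (j : ℕ) :
    walk s (j+1) = walk s j + (if h : j < k then step (s ⟨j,h⟩) else 0) :=
  Finset.sum_range_succ _ _

lemma walk_sub {d k : ℕ} (s : Fin k → ASym d) {a b : ℕ} (hab : a ≤ b) :
    walk s b - walk s a
      = ∑ j ∈ Finset.Ico a b, (if h : j < k then step (s ⟨j,h⟩) else 0) := by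
  unfold walk
  rw [Finset.sum_Ico_eq_sub _ hab]

lemma l1_walk_segment {d k : ℕ} (s : Fin k → ASym d) {a b : ℕ} (hab : a ≤ b) :
    l1 (walk s b - walk s a)
      ≤ ∑ j ∈ Finset.Ico a b, l1 (if h : j < k then step (s ⟨j,h⟩) else 0) := by
  rw [walk_sub s hab]; exact l1_sum_le _ _

lemma phi_eq {d k : ℕ} (s : Fin k → ASym d) (n : Fin d → ℤ) :
    phi s n
      = (Finset.univ.filter fun j : Fin k => s j = none ∧ walk s (j:ℕ) = n).card := by
  unfold phi
  congr 1
  apply Finset.filter_congr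
  intro j _
  rw [walk_succ, dif_pos j.isLt]
  constructor
  · rintro ⟨h1, h2⟩
    rw [h2, add_eq_left] at h1
    rw [step_eq_zero_iff] at h1
    simpa [Fin.eta] using ⟨h1, h2⟩
  · rintro ⟨h1, h2⟩
    have : step (s ⟨(j:ℕ), j.isLt⟩) = 0 := by
      rw [step_eq_zero_iff]; simpa [Fin.eta] using h1
    rw [this, add_zero]
    exact ⟨h2, h2⟩

/-- The witness string `V U_1^a V D_1^a` of length `2a+2`. -/
def witness (d a : ℕ) (hd : 0 < d) : Fin (2*a+2) → ASym d := fun j =>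
  if (j : ℕ) = 0 ∨ (j : ℕ) = a + 1 then none
  else if (j : ℕ) ≤ a then some (⟨0,hd⟩, true) else some (⟨0,hd⟩, false)

def coef (a : ℕ) (j : ℕ) : ℤ :=
  ((min j (a+1) : ℕ) : ℤ) - ((min j 1 : ℕ) : ℤ)
    - (((min j (2*a+2) : ℕ) : ℤ) - ((min j (a+2) : ℕ) : ℤ))

lemma walk_witness (d a : ℕ) (hd : 0 < d) (j : ℕ) :
    walk (witness d a hd) j = coef a j • Pi.single (⟨0,hd⟩ : Fin d) (1:ℤ) := by
  induction j with
  | zero =>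
      rw [walk_zero]
      have : coef a 0 = 0 := by unfold coef; omega
      rw [this, zero_smul]
  | succ j ih =>
      rw [walk_succ, ih]
      by_cases h : j < 2*a+2
      · rw [dif_pos h]
        show _ + step (witness d a hd ⟨j, h⟩) = _
        unfold witness
        simp only
        split_ifs with h0 h1
        · have hc : coef a (j+1) = coef a j := by unfold coef; omega
          rw [hc]; simp [step]
        · have hc : coef a (j+1) = coef a j + 1 := by unfold coef; omega
          rw [hc, add_smul, one_smul]; simp [step]
        · have hc : coef a (j+1) = coef a j - 1 := by unfold coef; omega
          rw [hc, sub_smul, one_smul, step]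
          abel
      · rw [dif_neg h]
        have hc : coef a (j+1) = coef a j := by unfold coef; omega
        rw [hc, add_zero]

lemma witness_none_iff (d a : ℕ) (hd : 0 < d) (j : Fin (2*a+2)) :
    witness d a hd j = none ↔ ((j : ℕ) = 0 ∨ (j : ℕ) = a + 1) := by
  unfold witness
  split_ifs with h h1 <;> simpa using h

lemma smul_single_one {d : ℕ} (v : Fin d) (c : ℤ) :
    c • (Pi.single v 1 : Fin d → ℤ) = Pi.single v c := by
  funext u
  by_cases h : u = v
  · subst h; simp
  · simp [Pi.single_eq_of_ne h]

/-- For even `m ≥ 4` and `β = δ + δ^{(m/2-1)e_1}`, we have `p^m(β) > 0` and `p^k(β) = 0`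
for every `k < m`. -/
theorem pathCount_even_deg {d m : ℕ} (hd : 0 < d) (hm : 4 ≤ m) (heven : Even m) :
    0 < pathCount d m
        (fun n => deltaIdx 0 n + deltaIdx (((m / 2 - 1 : ℕ) : ℤ) • Pi.single (⟨0, hd⟩ : Fin d) (1 : ℤ)) n) ∧
      ∀ k < m, pathCount d k
        (fun n => deltaIdx 0 n + deltaIdx (((m / 2 - 1 : ℕ) : ℤ) • Pi.single (⟨0, hd⟩ : Fin d) (1 : ℤ)) n) = 0 := by
  classical
  obtain ⟨t, ht⟩ := heven
  obtain ⟨a, ha, rfl⟩ : ∃ a, 1 ≤ a ∧ m = 2*a+2 := ⟨m/2 - 1, by omega, by omega⟩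
  have hA : (2*a+2)/2 - 1 = a := by omega
  simp only [hA]
  set v0 : Fin d := ⟨0, hd⟩ with hv0
  set e : Fin d → ℤ := Pi.single v0 (1:ℤ) with he
  set z : Fin d → ℤ := ((a:ℕ):ℤ) • e with hz
  have hkey : ∀ c c' : ℤ, c • e = c' • e ↔ c = c' := by
    intro c c'
    constructor
    · intro h
      have := congrFun h v0
      simpa [he, Pi.single_eq_same] using this
    · rintro rfl; rfl
  have hzne : z ≠ 0 := by
    rw [hz]
    intro h
    rw [show (0 : Fin d → ℤ) = (0:ℤ) • e by rw [zero_smul]] at h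
    rw [hkey] at h
    omega
  have hl1z : l1 z = (a:ℤ) := by
    rw [hz, he, smul_single_one, l1_single]
    simp
  constructor
  · -- positivity: the witness works
    rw [pathCount, Finset.card_pos]
    refine ⟨witness d a hd, Finset.mem_filter.mpr ⟨Finset.mem_univ _, ?_, 0, fun n => ?_⟩⟩
    · rw [walk_witness]
      have : coef a (2*a+2) = 0 := by unfold coef; omega
      rw [this, zero_smul]
    · rw [sub_zero, phi_eq]
      have hcoef0 : coef a 0 = 0 := by unfold coef; omega
      have hcoefa : coef a (a+1) = (a:ℤ) := by unfold coef; omega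
      by_cases h0 : n = 0
      · subst h0
        have : (Finset.univ.filter fun j : Fin (2*a+2) =>
            witness d a hd j = none ∧ walk (witness d a hd) (j:ℕ) = 0)
            = {(⟨0, by omega⟩ : Fin (2*a+2))} := by
          ext j
          simp only [Finset.mem_filter, Finset.mem_univ, true_and, Finset.mem_singleton,
            witness_none_iff, walk_witness]
          constructor
          · rintro ⟨h01 | h01, hw⟩
            · exact Fin.ext h01
            · exfalso
              rw [h01, hcoefa] at hw
              rw [show (0 : Fin d → ℤ) = (0:ℤ) • e by rw [zero_smul]] at hw
              rw [hkey] at hw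
              omega
          · rintro rfl
            refine ⟨Or.inl rfl, ?_⟩
            show coef a 0 • e = 0
            rw [hcoef0, zero_smul]
        rw [this, Finset.card_singleton]
        have : deltaIdx z 0 = 0 := by
          rw [deltaIdx, if_neg]
          intro h; exact hzne h.symm
        rw [this, deltaIdx, if_pos rfl]
      · by_cases hz0 : n = z
        · subst hz0
          have : (Finset.univ.filter fun j : Fin (2*a+2) =>
              witness d a hd j = none ∧ walk (witness d a hd) (j:ℕ) = z)
              = {(⟨a+1, by omega⟩ : Fin (2*a+2))} := by
            ext j
            simp only [Finset.mem_filter, Finset.mem_univ, true_and, Finset.mem_singleton,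
              witness_none_iff, walk_witness]
            constructor
            · rintro ⟨h01 | h01, hw⟩
              · exfalso
                rw [h01, hcoef0, zero_smul] at hw
                exact hzne hw.symm
              · exact Fin.ext h01
            · rintro rfl
              refine ⟨Or.inr rfl, ?_⟩
              show coef a (a+1) • e = z
              rw [hcoefa, hz]
          rw [this, Finset.card_singleton]
          have h1 : deltaIdx 0 z = 0 := by
            rw [deltaIdx, if_neg hzne]
          rw [h1, deltaIdx, if_pos rfl]
        · have : (Finset.univ.filter fun j : Fin (2*a+2) =>
              witness d a hd j = none ∧ walk (witness d a hd) (j:ℕ) = n) = ∅ := by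
            rw [Finset.filter_eq_empty_iff]
            intro j _
            rw [witness_none_iff, walk_witness]
            rintro ⟨h01 | h01, hw⟩
            · rw [h01, hcoef0, zero_smul] at hw
              exact h0 hw.symm
            · rw [h01, hcoefa] at hw
              exact hz0 hw.symm
          rw [this, Finset.card_empty, deltaIdx, if_neg h0, deltaIdx, if_neg hz0]
  · -- no shorter path
    intro k hk
    rw [pathCount, Finset.card_eq_zero, Finset.filter_eq_empty_iff]
    intro s _
    rintro ⟨hbal, i, hφ⟩
    set x : Fin d → ℤ := -i with hx
    set y : Fin d → ℤ := z - i with hy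
    have hxy : x ≠ y := by
      intro h
      apply hzne
      have : z = y - x := by rw [hy, hx]; abel
      rw [this, ← h, sub_self]
    have hphix : phi s x = 1 := by
      have := hφ 0
      rw [zero_sub] at this
      rw [← this, deltaIdx, if_pos rfl, deltaIdx, if_neg (fun h => hzne h.symm)]
    have hphiy : phi s y = 1 := by
      have := hφ z
      rw [hy]
      rw [← this, deltaIdx, if_neg hzne, deltaIdx, if_pos rfl]
    rw [phi_eq] at hphix hphiy
    obtain ⟨j1, hj1⟩ := Finset.card_eq_one.mp hphix
    obtain ⟨j2, hj2⟩ := Finset.card_eq_one.mp hphiy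
    have hj1p : s j1 = none ∧ walk s (j1:ℕ) = x := by
      have : j1 ∈ ({j1} : Finset (Fin k)) := Finset.mem_singleton_self _
      rw [← hj1, Finset.mem_filter] at this
      exact this.2
    have hj2p : s j2 = none ∧ walk s (j2:ℕ) = y := by
      have : j2 ∈ ({j2} : Finset (Fin k)) := Finset.mem_singleton_self _
      rw [← hj2, Finset.mem_filter] at this
      exact this.2
    have hj12 : (j1:ℕ) ≠ (j2:ℕ) := by
      intro h
      apply hxy
      rw [← hj1p.2, ← hj2p.2, h]
    -- the key length estimate
    have key2 : ∀ p q : Fin k, (p:ℕ) < (q:ℕ) → s p = none → s q = none →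
        l1 (walk s (q:ℕ) - walk s (p:ℕ)) = (a:ℤ) →
        (a:ℤ) ≤ l1 (walk s (p:ℕ)) + l1 (walk s (q:ℕ)) → False := by
      intro p q hpq hp hq hdiff hsum
      set F : ℕ → ℤ := fun j => l1 (if h : j < k then step (s ⟨j,h⟩) else 0) with hF
      have c1 : l1 (walk s (p:ℕ)) ≤ ∑ j ∈ Finset.Ico 0 (p:ℕ), F j := by
        have := l1_walk_segment s (Nat.zero_le (p:ℕ))
        rwa [walk_zero, sub_zero] at this
      have c2 : (a:ℤ) ≤ ∑ j ∈ Finset.Ico (p:ℕ) (q:ℕ), F j := by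
        rw [← hdiff]
        exact l1_walk_segment s (le_of_lt hpq)
      have c3 : l1 (walk s (q:ℕ)) ≤ ∑ j ∈ Finset.Ico (q:ℕ) k, F j := by
        have := l1_walk_segment s (le_of_lt q.isLt)
        rwa [hbal, zero_sub, l1_neg] at this
      have hsplit : ∑ j ∈ Finset.Ico 0 (p:ℕ), F j + ∑ j ∈ Finset.Ico (p:ℕ) (q:ℕ), F j
          + ∑ j ∈ Finset.Ico (q:ℕ) k, F j = ∑ j ∈ Finset.range k, F j := by
        rw [Finset.sum_Ico_consecutive _ (Nat.zero_le _) (le_of_lt hpq),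
          Finset.sum_Ico_consecutive _ (Nat.zero_le _) (le_of_lt q.isLt),
          ← Finset.range_eq_Ico]
      have hFp : F (p:ℕ) = 0 := by
        rw [hF]
        simp only [dif_pos p.isLt]
        have : s ⟨(p:ℕ), p.isLt⟩ = none := by simpa [Fin.eta] using hp
        rw [this]
        simp [step, l1_zero]
      have hFq : F (q:ℕ) = 0 := by
        rw [hF]
        simp only [dif_pos q.isLt]
        have : s ⟨(q:ℕ), q.isLt⟩ = none := by simpa [Fin.eta] using hq
        rw [this]
        simp [step, l1_zero]
      have hpmem : (p:ℕ) ∈ Finset.range k := Finset.mem_range.mpr p.isLt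
      have hqmem : (q:ℕ) ∈ (Finset.range k).erase (p:ℕ) :=
        Finset.mem_erase.mpr ⟨Ne.symm (ne_of_lt hpq), Finset.mem_range.mpr q.isLt⟩
      have hbound : ∑ j ∈ Finset.range k, F j ≤ (k:ℤ) - 2 := by
        rw [← Finset.sum_erase_add _ _ hpmem, hFp, add_zero,
          ← Finset.sum_erase_add _ _ hqmem, hFq, add_zero]
        have hcard : (((Finset.range k).erase (p:ℕ)).erase (q:ℕ)).card = k - 2 := by
          rw [Finset.card_erase_of_mem hqmem, Finset.card_erase_of_mem hpmem,
            Finset.card_range]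
          omega
        calc ∑ j ∈ ((Finset.range k).erase (p:ℕ)).erase (q:ℕ), F j
            ≤ (((Finset.range k).erase (p:ℕ)).erase (q:ℕ)).card • (1:ℤ) := by
              apply Finset.sum_le_card_nsmul
              intro j _
              simp only [hF]
              by_cases hjk : j < k
              · rw [dif_pos hjk]; exact l1_step_le _
              · rw [dif_neg hjk, l1_zero]; exact zero_le_one
          _ = ((k - 2 : ℕ) : ℤ) := by rw [hcard]; simp
          _ ≤ (k:ℤ) - 2 := by omega
      have : 2 * (a:ℤ) ≤ (k:ℤ) - 2 := by
        calc 2 * (a:ℤ) = (a:ℤ) + (a:ℤ) := by ring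
          _ ≤ (l1 (walk s (p:ℕ)) + l1 (walk s (q:ℕ))) + (a:ℤ) := by linarith
          _ ≤ ∑ j ∈ Finset.range k, F j := by
              rw [← hsplit]; linarith
          _ ≤ (k:ℤ) - 2 := hbound
      omega
    have hyx : y - x = z := by rw [hy, hx]; abel
    have hxysub : l1 (x - y) = (a:ℤ) := by
      rw [show x - y = -(y-x) by abel, l1_neg, hyx, hl1z]
    have hsumxy : (a:ℤ) ≤ l1 x + l1 y := by
      calc (a:ℤ) = l1 (x - y) := hxysub.symm
        _ ≤ l1 x + l1 (-y) := by rw [sub_eq_add_neg]; exact l1_add _ _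
        _ = l1 x + l1 y := by rw [l1_neg y]
    rcases lt_or_gt_of_ne hj12 with h | h
    · apply key2 j1 j2 h hj1p.1 hj2p.1
      · rw [hj1p.2, hj2p.2, hyx, hl1z]
      · rw [hj1p.2, hj2p.2]; exact hsumxy
    · apply key2 j2 j1 h hj2p.1 hj1p.1
      · rw [hj1p.2, hj2p.2, hxysub]
      · rw [hj1p.2, hj2p.2]; linarith
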